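/- The Kraus operators of the queue channel satisfy the completeness relation: the sum over all Kraus operators K of K†K equals the identity, provided each Kraus operator maps an orthonormal set of basis vectors injectively in the sense required. Concretely: for the single Kraus operator K_s = Σ_{n,m,j} |n⟩⟨n| ⊗ |m⟩⟨m| ⊗ |j+n-m⟩⟨j| (with j ranging over D_O−1 ≤ j ≤ D_Q−D_I), together with the barrier operators K_{l} and K_{u} as defined, Σ_k K_k† K_k = 𝟙 on ℂ^{D_I} ⊗ ℂ^{D_O} ⊗ ℂ^{D_Q}. -/
import Mathlib


open Matrix

variable (DI DO DQ : ℕ)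

/-- Index type for the composite register `I ⊗ O ⊗ Q`. -/
abbrev QIdx (DI DO DQ : ℕ) := (Fin DI × Fin DO) × Fin DQ

/-- `K_s = ∑_{n,m} ∑_{D_O-1 ≤ j ≤ D_Q-D_I} |n⟩⟨n| ⊗ |m⟩⟨m| ⊗ |j+n-m⟩⟨j|`:
the entry at row `((n,m),q)`, column `((n',m'),j)` is 1 iff `n = n'`, `m = m'`,
`D_O - 1 ≤ j ≤ D_Q - D_I` and `q = j + n - m`. -/
def Ks : Matrix (QIdx DI DO DQ) (QIdx DI DO DQ) ℂ :=
  fun p q =>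
    if p.1.1 = q.1.1 ∧ p.1.2 = q.1.2 ∧
        (DO : ℤ) - 1 ≤ (q.2 : ℤ) ∧ (q.2 : ℤ) ≤ (DQ : ℤ) - DI ∧
        (p.2 : ℤ) = (q.2 : ℤ) + (p.1.1 : ℤ) - (p.1.2 : ℤ)
    then 1 else 0

/-- `K_l = ∑_{n,m} |n⟩⟨n| ⊗ |m⟩⟨m| ⊗ |max(l+n-m,0)⟩⟨l|` for `l ∈ {0,…,D_O-2}`. -/
def Kl (l : ℕ) : Matrix (QIdx DI DO DQ) (QIdx DI DO DQ) ℂ :=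
  fun p q =>
    if p.1.1 = q.1.1 ∧ p.1.2 = q.1.2 ∧ (q.2 : ℕ) = l ∧
        (p.2 : ℤ) = max ((l : ℤ) + (p.1.1 : ℤ) - (p.1.2 : ℤ)) 0
    then 1 else 0

/-- `K_u = ∑_{n,m} |n⟩⟨n| ⊗ |m⟩⟨m| ⊗ |min(u+n-m,D_Q-1)⟩⟨u|`
for `u ∈ {D_Q-D_I+1,…,D_Q-1}`. -/
def Ku (u : ℕ) : Matrix (QIdx DI DO DQ) (QIdx DI DO DQ) ℂ :=
  fun p q =>
    if p.1.1 = q.1.1 ∧ p.1.2 = q.1.2 ∧ (q.2 : ℕ) = u ∧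
        (p.2 : ℤ) = min ((u : ℤ) + (p.1.1 : ℤ) - (p.1.2 : ℤ)) ((DQ : ℤ) - 1)
    then 1 else 0

lemma sum_ite_one {α : Type*} [Fintype α] [DecidableEq α] {P : α → Prop} [DecidablePred P]
    {a : α} (h : ∀ x, P x ↔ x = a) : (∑ x, if P x then (1:ℂ) else 0) = 1 := by
  simp only [h]
  simp

lemma sum_ite_zero {α : Type*} [Fintype α] {P : α → Prop} [DecidablePred P]
    (h : ∀ x, ¬ P x) : (∑ x, if P x then (1:ℂ) else 0) = 0 := by
  simp [h]

lemma Ks_gram (hdim : DI + DO ≤ DQ + 1) (p q : QIdx DI DO DQ) :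
    ((Ks DI DO DQ)ᴴ * Ks DI DO DQ) p q =
      if p = q ∧ (DO:ℤ) - 1 ≤ (q.2:ℤ) ∧ (q.2:ℤ) ≤ (DQ:ℤ) - DI then 1 else 0 := by
  classical
  simp only [Matrix.mul_apply, Matrix.conjTranspose_apply, Ks]
  simp only [apply_ite (star : ℂ → ℂ), star_one, star_zero, ite_mul, zero_mul, mul_ite,
    mul_one, mul_zero, ← ite_and]
  by_cases hc : p = q ∧ (DO:ℤ) - 1 ≤ (q.2:ℤ) ∧ (q.2:ℤ) ≤ (DQ:ℤ) - DI
  · obtain ⟨rfl, h1, h2⟩ := hc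
    rw [if_pos ⟨rfl, h1, h2⟩]
    have hm : (p.1.2 : ℤ) < DO := by have := p.1.2.isLt; omega
    have hn : (p.1.1 : ℤ) < DI := by have := p.1.1.isLt; omega
    have hv1 : ((p.2:ℤ) + (p.1.1:ℤ) - (p.1.2:ℤ)).toNat < DQ := by omega
    refine sum_ite_one (a := ((p.1.1, p.1.2), ⟨((p.2:ℤ) + (p.1.1:ℤ) - (p.1.2:ℤ)).toNat, hv1⟩)) ?_
    intro r
    simp only [Prod.ext_iff, Fin.ext_iff]
    constructor
    · rintro ⟨⟨e1, e2, -, -, e3⟩, -⟩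
      refine ⟨⟨?_, ?_⟩, ?_⟩ <;> omega
    · rintro ⟨⟨e1, e2⟩, e3⟩
      refine ⟨⟨?_, ?_, h1, h2, ?_⟩, ?_, ?_, h1, h2, ?_⟩ <;> omega
  · rw [if_neg hc]
    refine sum_ite_zero ?_
    rintro r ⟨⟨g1, g2, k1, k2, g3⟩, ⟨e1, e2, f1, f2, e3⟩⟩
    apply hc
    have : p = q := by
      refine Prod.ext (Prod.ext ?_ ?_) ?_ <;> simp only [Fin.ext_iff] <;> omega
    exact ⟨this, k1, k2⟩

lemma Kl_gram (hdim : DI + DO ≤ DQ + 1) (l : ℕ) (hl : (l:ℤ) ≤ (DO:ℤ) - 2)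
    (p q : QIdx DI DO DQ) :
    ((Kl DI DO DQ l)ᴴ * Kl DI DO DQ l) p q =
      if p = q ∧ (q.2:ℕ) = l then 1 else 0 := by
  classical
  simp only [Matrix.mul_apply, Matrix.conjTranspose_apply, Kl]
  simp only [apply_ite (star : ℂ → ℂ), star_one, star_zero, ite_mul, zero_mul, mul_ite,
    mul_one, mul_zero, ← ite_and]
  by_cases hc : p = q ∧ (q.2:ℕ) = l
  · obtain ⟨rfl, h1⟩ := hc
    rw [if_pos ⟨rfl, h1⟩]
    have hm : (p.1.2 : ℤ) < DO := by have := p.1.2.isLt; omega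
    have hn : (p.1.1 : ℤ) < DI := by have := p.1.1.isLt; omega
    have hv1 : (max ((l:ℤ) + (p.1.1:ℤ) - (p.1.2:ℤ)) 0).toNat < DQ := by omega
    refine sum_ite_one (a := ((p.1.1, p.1.2),
      ⟨(max ((l:ℤ) + (p.1.1:ℤ) - (p.1.2:ℤ)) 0).toNat, hv1⟩)) ?_
    intro r
    simp only [Prod.ext_iff, Fin.ext_iff]
    constructor
    · rintro ⟨⟨e1, e2, -, e3⟩, -⟩
      refine ⟨⟨?_, ?_⟩, ?_⟩ <;> omega
    · rintro ⟨⟨e1, e2⟩, e3⟩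
      refine ⟨⟨?_, ?_, h1, ?_⟩, ?_, ?_, h1, ?_⟩ <;> omega
  · rw [if_neg hc]
    refine sum_ite_zero ?_
    rintro r ⟨⟨g1, g2, k1, g3⟩, ⟨e1, e2, f1, e3⟩⟩
    apply hc
    have : p = q := by
      refine Prod.ext (Prod.ext ?_ ?_) ?_ <;> simp only [Fin.ext_iff] <;> omega
    exact ⟨this, k1⟩

lemma Ku_gram (hdim : DI + DO ≤ DQ + 1) (u : ℕ)
    (hu1 : (DQ:ℤ) - DI + 1 ≤ (u:ℤ)) (hu2 : (u:ℤ) ≤ (DQ:ℤ) - 1)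
    (p q : QIdx DI DO DQ) :
    ((Ku DI DO DQ u)ᴴ * Ku DI DO DQ u) p q =
      if p = q ∧ (q.2:ℕ) = u then 1 else 0 := by
  classical
  simp only [Matrix.mul_apply, Matrix.conjTranspose_apply, Ku]
  simp only [apply_ite (star : ℂ → ℂ), star_one, star_zero, ite_mul, zero_mul, mul_ite,
    mul_one, mul_zero, ← ite_and]
  by_cases hc : p = q ∧ (q.2:ℕ) = u
  · obtain ⟨rfl, h1⟩ := hc
    rw [if_pos ⟨rfl, h1⟩]
    have hm : (p.1.2 : ℤ) < DO := by have := p.1.2.isLt; omega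
    have hn : (p.1.1 : ℤ) < DI := by have := p.1.1.isLt; omega
    have hv1 : (min ((u:ℤ) + (p.1.1:ℤ) - (p.1.2:ℤ)) ((DQ:ℤ) - 1)).toNat < DQ := by omega
    refine sum_ite_one (a := ((p.1.1, p.1.2),
      ⟨(min ((u:ℤ) + (p.1.1:ℤ) - (p.1.2:ℤ)) ((DQ:ℤ) - 1)).toNat, hv1⟩)) ?_
    intro r
    simp only [Prod.ext_iff, Fin.ext_iff]
    constructor
    · rintro ⟨⟨e1, e2, -, e3⟩, -⟩
      refine ⟨⟨?_, ?_⟩, ?_⟩ <;> omega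
    · rintro ⟨⟨e1, e2⟩, e3⟩
      refine ⟨⟨?_, ?_, h1, ?_⟩, ?_, ?_, h1, ?_⟩ <;> omega
  · rw [if_neg hc]
    refine sum_ite_zero ?_
    rintro r ⟨⟨g1, g2, k1, g3⟩, ⟨e1, e2, f1, e3⟩⟩
    apply hc
    have : p = q := by
      refine Prod.ext (Prod.ext ?_ ?_) ?_ <;> simp only [Fin.ext_iff] <;> omega
    exact ⟨this, k1⟩

/-- The Kraus operators of the queue channel satisfy the completeness relation
`K_sᴴ K_s + ∑_{l ∈ L} K_lᴴ K_l + ∑_{u ∈ U} K_uᴴ K_u = 𝟙`. -/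
theorem queue_kraus_completeness
    (hI : 0 < DI) (hO : 0 < DO) (hQ : 0 < DQ)
    (hdim : DI + DO ≤ DQ + 1) :
    (Ks DI DO DQ)ᴴ * Ks DI DO DQ
      + ∑ l ∈ Finset.range (DO - 1), (Kl DI DO DQ l)ᴴ * Kl DI DO DQ l
      + ∑ u ∈ Finset.Icc (DQ - DI + 1) (DQ - 1), (Ku DI DO DQ u)ᴴ * Ku DI DO DQ u
      = 1 := by
  classical
  have hIQ : DI ≤ DQ := by omega
  ext p q
  simp only [Matrix.add_apply, Matrix.sum_apply]
  have h2 : ∀ l ∈ Finset.range (DO - 1),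
      ((Kl DI DO DQ l)ᴴ * Kl DI DO DQ l) p q = if p = q ∧ (q.2:ℕ) = l then 1 else 0 :=
    fun l hl => Kl_gram DI DO DQ hdim l (by have := Finset.mem_range.mp hl; omega) p q
  have h3 : ∀ u ∈ Finset.Icc (DQ - DI + 1) (DQ - 1),
      ((Ku DI DO DQ u)ᴴ * Ku DI DO DQ u) p q = if p = q ∧ (q.2:ℕ) = u then 1 else 0 := by
    intro u hu
    have h := Finset.mem_Icc.mp hu
    exact Ku_gram DI DO DQ hdim u (by omega) (by omega) p q
  rw [Ks_gram DI DO DQ hdim p q, Finset.sum_congr rfl h2, Finset.sum_congr rfl h3]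
  by_cases hpq : p = q
  · subst hpq
    simp only [true_and]
    rw [Matrix.one_apply_eq]
    have hj : (p.2 : ℕ) < DQ := p.2.isLt
    have hsl : (∑ l ∈ Finset.range (DO - 1), if (p.2:ℕ) = l then (1:ℂ) else 0)
        = if (p.2:ℕ) < DO - 1 then 1 else 0 := by
      rw [Finset.sum_ite_eq (Finset.range (DO - 1)) (p.2:ℕ) (fun _ => (1:ℂ))]
      simp [Finset.mem_range]
    have hsu : (∑ u ∈ Finset.Icc (DQ - DI + 1) (DQ - 1), if (p.2:ℕ) = u then (1:ℂ) else 0)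
        = if DQ - DI + 1 ≤ (p.2:ℕ) ∧ (p.2:ℕ) ≤ DQ - 1 then 1 else 0 := by
      rw [Finset.sum_ite_eq (Finset.Icc (DQ - DI + 1) (DQ - 1)) (p.2:ℕ) (fun _ => (1:ℂ))]
      simp [Finset.mem_Icc]
    rw [hsl, hsu]
    by_cases hA : (DO:ℤ) - 1 ≤ ((p.2:ℕ):ℤ) ∧ ((p.2:ℕ):ℤ) ≤ (DQ:ℤ) - DI
    · have hB : ¬ ((p.2:ℕ) < DO - 1) := by omega
      have hC : ¬ (DQ - DI + 1 ≤ (p.2:ℕ) ∧ (p.2:ℕ) ≤ DQ - 1) := by omega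
      rw [if_pos hA, if_neg hB, if_neg hC]; ring
    · by_cases hB : (p.2:ℕ) < DO - 1
      · have hC : ¬ (DQ - DI + 1 ≤ (p.2:ℕ) ∧ (p.2:ℕ) ≤ DQ - 1) := by omega
        rw [if_neg hA, if_pos hB, if_neg hC]; ring
      · have hC : DQ - DI + 1 ≤ (p.2:ℕ) ∧ (p.2:ℕ) ≤ DQ - 1 := by omega
        rw [if_neg hA, if_neg hB, if_pos hC]; ring
  · rw [Matrix.one_apply_ne hpq]
    simp [hpq]
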